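/- arXiv:cs/0408045 — 5 statements merged into one kernel-verified Lean document; each statement's English description precedes it below -/
import Mathlib

section
/- Let f⃗ : 𝔹ⁿ → 𝔹ⁿ be the tuple function of the monotone functions f₁,…,fₙ, and let g_{S,i} be the pruned family of functions. Then the Pruned Closed Form equals the n-fold iterate of f⃗ on the bottom element: g⃗_∅(0⃗) = f⃗ⁿ(0⃗), where g⃗_∅(0⃗) = (g_{∅,1}(0⃗), …, g_{∅,n}(0⃗)). -/
/-!
Both sides are the least fixed point of `f⃗`. The Kleene chain `f⃗ᵏ(0⃗)` gains a `true`
coordinate at every step until it stops, so it reaches the least fixed point within `n` steps.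
And `g_{S,i}(0⃗)` is the `i`-th coordinate of the least solution of the system with the
coordinates in `S` pinned to `0`: a monotone map `𝔹 → 𝔹` reaches its least fixed point in one
step from `0`, so pinning `i` to `0` while solving for the other coordinates loses nothing.
-/

/-- The pruned family of functions `g_{S,i}`: `g_{S,i} = f_i ∘ (g_{S∪{i},1},…,g_{S∪{i},n})`
if `i ∉ S`, and the constant-`false` (constant-0) function if `i ∈ S`. -/
def prunedG (n : ℕ) (f : Fin n → (Fin n → Bool) → Bool) :
    Finset (Fin n) → Fin n → (Fin n → Bool) → Bool
  | S, i => fun x =>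
    if h : i ∈ S then false
    else f i (fun j => prunedG n f (insert i S) j x)
termination_by S _ => n - S.card
decreasing_by
  have h1 : (insert i S).card = S.card + 1 := Finset.card_insert_of_notMem h
  have h2 : (insert i S).card ≤ n := by
    simpa using Finset.card_le_univ (insert i S)
  omega

open Function

section Kleene

variable {α : Type*}

theorem Monotone.isFixedPt_iterate_of_strictMono_bounded [PartialOrder α] {F : α → α}
    (hF : Monotone F) {x : α} (hx : x ≤ F x) {w : α → ℕ} (hw : StrictMono w) {N : ℕ}
    (hN : ∀ y, w y ≤ N) : IsFixedPt F (F^[N] x) := by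
  have grow : ∀ k, ¬IsFixedPt F (F^[k] x) → w (F^[k] x) < w (F^[k + 1] x) := fun k hk =>
    hw <| lt_of_le_of_ne (hF.monotone_iterate_of_le_map hx k.le_succ) fun h =>
      hk ((iterate_succ_apply' F k x).symm.trans h.symm)
  -- Until the chain stops, every step raises the weight, so it cannot move `N + 1` times.
  have climb : ∀ k, ¬IsFixedPt F (F^[k] x) → k < w (F^[k + 1] x) := by
    intro k
    induction k with
    | zero => exact fun h => (Nat.zero_le _).trans_lt (grow 0 h)
    | succ k ih =>
      intro h
      have hk : ¬IsFixedPt F (F^[k] x) := fun hfix =>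
        h (by rw [IsFixedPt, iterate_succ_apply', hfix]; exact hfix)
      exact Nat.lt_of_le_of_lt (ih hk) (grow (k + 1) h)
  by_contra h
  exact (climb N h).not_ge (hN _)

theorem OrderHom.iterate_bot_le_lfp [CompleteLattice α] (F : α →o α) (k : ℕ) :
    F^[k] ⊥ ≤ F.lfp := by
  induction k with
  | zero => exact bot_le
  | succ k ih => exact (iterate_succ_apply' F k ⊥).trans_le (F.map_le_lfp ih)

theorem OrderHom.lfp_eq_iterate_bot_of_isFixedPt [CompleteLattice α] (F : α →o α) {k : ℕ}
    (h : IsFixedPt F (F^[k] ⊥)) : F.lfp = F^[k] ⊥ :=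
  le_antisymm (F.lfp_le_fixed h) (F.iterate_bot_le_lfp k)

end Kleene

section BoolVectors

variable {ι : Type*} [Fintype ι]

def trueCount (x : ι → Bool) : ℕ := ∑ i, (x i).toNat

theorem trueCount_strictMono : StrictMono (trueCount (ι := ι)) := by
  intro x y hxy
  obtain ⟨hle, i, hi⟩ := Pi.lt_def.1 hxy
  refine Finset.sum_lt_sum (fun j _ => Bool.toNat_le_toNat (hle j)) ⟨i, Finset.mem_univ i, ?_⟩
  revert hi; cases x i <;> cases y i <;> decide

theorem trueCount_le_card (x : ι → Bool) : trueCount x ≤ Fintype.card ι := by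
  simpa [trueCount] using Finset.sum_le_sum fun i (_ : i ∈ Finset.univ) => Bool.toNat_le (x i)

theorem OrderHom.lfp_eq_iterate_card (F : (ι → Bool) →o (ι → Bool)) :
    F.lfp = F^[Fintype.card ι] ⊥ :=
  F.lfp_eq_iterate_bot_of_isFixedPt <| F.monotone.isFixedPt_iterate_of_strictMono_bounded
    bot_le trueCount_strictMono trueCount_le_card

end BoolVectors

section Pruning

variable {ι : Type*} [DecidableEq ι] (f : ι → (ι → Bool) → Bool) (hf : ∀ i, Monotone (f i))

def prunedStep (S : Finset ι) : (ι → Bool) →o (ι → Bool) where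
  toFun x i := if i ∈ S then false else f i x
  monotone' x y hxy i := by
    dsimp only
    split_ifs
    exacts [le_rfl, hf i hxy]

theorem prunedStep_apply (S : Finset ι) (x : ι → Bool) (i : ι) :
    prunedStep f hf S x i = if i ∈ S then false else f i x :=
  rfl

theorem prunedStep_empty : ⇑(prunedStep f hf ∅) = fun x i => f i x := by
  ext x i
  simp [prunedStep_apply]

theorem prunedStep_antitone : Antitone (prunedStep f hf) := by
  intro S T hST x i
  simp only [prunedStep_apply]
  split_ifs with hT hS hS'
  exacts [le_rfl, Bool.false_le _, absurd (hST hS') hT, le_rfl]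

theorem prunedStep_insert_apply_of_ne {S : Finset ι} {i j : ι} (hji : j ≠ i) (x : ι → Bool) :
    prunedStep f hf (insert i S) x j = prunedStep f hf S x j := by
  simp [prunedStep_apply, hji]

theorem lfp_prunedStep_apply_of_mem {S : Finset ι} {i : ι} (hi : i ∈ S) :
    (prunedStep f hf S).lfp i = false := by
  rw [← (prunedStep f hf S).map_lfp, prunedStep_apply, if_pos hi]

theorem lfp_prunedStep_apply_of_notMem {S : Finset ι} {i : ι} (hi : i ∉ S) :
    (prunedStep f hf S).lfp i = f i (prunedStep f hf S).lfp := by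
  rw [← (prunedStep f hf S).map_lfp, prunedStep_apply, if_neg hi, OrderHom.map_lfp]

/-- In `Bool` the least solution in the `i`-th coordinate is reached in one step from `false`,
so solving the rest of the system with `i` pruned loses nothing. -/
theorem lfp_prunedStep_apply_eq_apply_lfp_insert {S : Finset ι} {i : ι} (hi : i ∉ S) :
    (prunedStep f hf S).lfp i = f i (prunedStep f hf (insert i S)).lfp := by
  set L := (prunedStep f hf (insert i S)).lfp
  have hLi : L i = false := lfp_prunedStep_apply_of_mem f hf (Finset.mem_insert_self i S)
  apply le_antisymm
  · cases hL : f i L with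
    | true => exact le_top
    | false =>
      have hfix : prunedStep f hf S L = L := by
        ext j
        by_cases hji : j = i
        · rw [hji, prunedStep_apply, if_neg hi, hL, hLi]
        · rw [← prunedStep_insert_apply_of_ne f hf hji, OrderHom.map_lfp]
      exact hLi ▸ (prunedStep f hf S).lfp_le_fixed hfix i
  · rw [lfp_prunedStep_apply_of_notMem f hf hi]
    exact hf i (OrderHom.lfp.monotone (prunedStep_antitone f hf (Finset.subset_insert i S)))

end Pruning

theorem prunedG_apply_eq_lfp {n : ℕ} (f : Fin n → (Fin n → Bool) → Bool)
    (hf : ∀ i, Monotone (f i)) (S : Finset (Fin n)) (i : Fin n) :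
    prunedG n f S i (fun _ => false) = (prunedStep f hf S).lfp i := by
  rw [prunedG]
  split_ifs with hi
  · exact (lfp_prunedStep_apply_of_mem f hf hi).symm
  · simp only [prunedG_apply_eq_lfp f hf (insert i S)]
    exact (lfp_prunedStep_apply_eq_apply_lfp_insert f hf hi).symm
termination_by n - S.card
decreasing_by
  have := Finset.card_lt_univ_of_notMem hi
  rw [Fintype.card_fin] at this
  rw [Finset.card_insert_of_notMem hi]
  omega

theorem prunedClosedForm_eq_iterate_general {n : ℕ}
    (f : Fin n → (Fin n → Bool) → Bool) (hf : ∀ i, Monotone (f i)) :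
    (fun i => prunedG n f ∅ i (fun _ => false)) =
      (fun x i => f i x)^[n] (fun _ => false) := by
  funext i
  rw [prunedG_apply_eq_lfp f hf, OrderHom.lfp_eq_iterate_card, Fintype.card_fin,
    prunedStep_empty]
  rfl

/-- The Pruned Closed Form equals the `n`-fold iterate of the tuple function `f⃗`
on the bottom element: `g⃗_∅(0⃗) = f⃗ⁿ(0⃗)`. -/
theorem prunedClosedForm_eq_iterate {n : ℕ} (hn : 1 ≤ n)
    (f : Fin n → (Fin n → Bool) → Bool) (hf : ∀ i, Monotone (f i)) :
    (fun i => prunedG n f ∅ i (fun _ => false)) =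
      (fun x i => f i x)^[n] (fun _ => false) :=
  prunedClosedForm_eq_iterate_general f hf
end

section
/- Let A be a complete lattice, 𝔹 the two-element Boolean lattice, and let F : A × 𝔹 → A and G : A × 𝔹 → 𝔹 be monotone functions. Then the least fixpoint of the map (a,b) ↦ (F(a,b), G(a,b)) on A × 𝔹 equals the least fixpoint of the map (a,b) ↦ (F(a,b), G(a,⊥)). -/
/-!
The second map lies below the first, so its least fixpoint is the smaller one. Conversely, every
fixpoint `(a, b)` of the second map is a prefixed point of the first: if `b = ⊤` there is nothing
to check in the Boolean coordinate, and if `b = ⊥` the two maps agree at `(a, b)`.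
-/

open Function

theorem OrderHom.lfp_eq_of_le_of_forall_isFixedPt {α : Type*} [CompleteLattice α]
    {f g : α →o α} (hgf : g ≤ f) (hf : ∀ x, IsFixedPt g x → f x ≤ x) : lfp f = lfp g :=
  le_antisymm (lfp_le f (hf _ g.isFixedPt_lfp)) (lfp.mono hgf)

theorem Bool.apply_le_of_apply_false_le {f : Bool → Bool} {b : Bool} (h : f false ≤ b) :
    f b ≤ b := by
  cases b
  · exact h
  · exact le_top

/-- For a complete lattice `A` and the two-element Boolean lattice `Bool`, and monotone
`F : A × Bool → A`, `G : A × Bool → Bool`, the least fixpoint of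
`(a,b) ↦ (F(a,b), G(a,b))` equals the least fixpoint of `(a,b) ↦ (F(a,b), G(a,⊥))`. -/
theorem lfp_eq_lfp_bot_bool {A : Type*} [CompleteLattice A]
    (F : A × Bool → A) (G : A × Bool → Bool)
    (hF : Monotone F) (hG : Monotone G) :
    OrderHom.lfp ⟨fun p => (F p, G p), fun _ _ h => Prod.mk_le_mk.2 ⟨hF h, hG h⟩⟩ =
      OrderHom.lfp ⟨fun p => (F p, G (p.1, ⊥)),
        fun _ _ h => Prod.mk_le_mk.2 ⟨hF h, hG (Prod.mk_le_mk.2 ⟨h.1, le_rfl⟩)⟩⟩ := by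
  refine OrderHom.lfp_eq_of_le_of_forall_isFixedPt
    (fun p => Prod.mk_le_mk.2 ⟨le_rfl, hG (Prod.mk_le_mk.2 ⟨le_rfl, bot_le⟩)⟩) ?_
  rintro ⟨a, b⟩ hfix
  obtain ⟨hF_eq, hG_eq⟩ := Prod.ext_iff.1 hfix
  exact Prod.mk_le_mk.2
    ⟨hF_eq.le, Bool.apply_le_of_apply_false_le (f := fun b => G (a, b)) hG_eq.le⟩
end

section
/- (Bekić–Leszczyłowski Theorem.) Let A and B be complete lattices and let F : A × B → A and G : A × B → B be monotone functions. Then the least fixpoint of the map (a,b) ↦ (F(a,b), G(a,b)) on A × B equals the least fixpoint of the map (a,b) ↦ (F(a,b), lfp(b' ↦ G(a,b'))), where lfp(b' ↦ G(a,b')) denotes the least fixpoint of the monotone map b' ↦ G(a,b') on B. -/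
/-!
Write `H = (F, G)` and `K = (F, partialLfp G ∘ fst)`, where `partialLfp G a = lfp (G (a, ·))`.
A fixpoint `q` of `K` is a fixpoint of `H`, since `q.2 = lfp (G (q.1, ·))` is fixed by
`G (q.1, ·)`; so `lfp H ≤ lfp K`. Conversely, if `p` is a fixpoint of `H` then `p.2` is a fixpoint
of `G (p.1, ·)`, hence above its least one, so `p` is a prefixpoint of `K` and `lfp K ≤ lfp H`.
-/

namespace OrderHom

variable {A B : Type*} [CompleteLattice A] [CompleteLattice B]

def partialLfp (G : A × B →o B) : A →o B :=
  lfp.comp (curry G)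

theorem map_partialLfp (G : A × B →o B) (a : A) : G (a, partialLfp G a) = partialLfp G a :=
  map_lfp (curry G a)

theorem partialLfp_le {G : A × B →o B} {p : A × B} (h : G p ≤ p.2) : partialLfp G p.1 ≤ p.2 :=
  lfp_le (curry G p.1) h

theorem isFixedPt_prod_of_isFixedPt_prod_partialLfp {F : A × B →o A} {G : A × B →o B}
    {q : A × B} (hq : F.prod ((partialLfp G).comp fst) q = q) : F.prod G q = q := by
  have hF : F q = q.1 := congrArg Prod.fst hq
  have hG : partialLfp G q.1 = q.2 := congrArg Prod.snd hq
  have hGq : G q = q.2 :=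
    calc G q = G (q.1, partialLfp G q.1) := by rw [hG]
      _ = q.2 := (map_partialLfp G q.1).trans hG
  exact Prod.ext hF hGq

theorem prod_partialLfp_le_of_isFixedPt_prod {F : A × B →o A} {G : A × B →o B}
    {p : A × B} (hp : F.prod G p = p) : F.prod ((partialLfp G).comp fst) p ≤ p := by
  have hF : F p = p.1 := congrArg Prod.fst hp
  have hG : G p = p.2 := congrArg Prod.snd hp
  exact Prod.mk_le_mk.2 ⟨hF.le, partialLfp_le hG.le⟩

theorem lfp_prod_eq_lfp_prod_partialLfp (F : A × B →o A) (G : A × B →o B) :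
    lfp (F.prod G) = lfp (F.prod ((partialLfp G).comp fst)) :=
  le_antisymm
    (lfp_le_fixed _ (isFixedPt_prod_of_isFixedPt_prod_partialLfp (map_lfp _)))
    (lfp_le _ (prod_partialLfp_le_of_isFixedPt_prod (map_lfp _)))

end OrderHom

/-- The Bekić–Leszczyłowski Theorem: for complete lattices `A`, `B` and monotone
`F : A × B → A`, `G : A × B → B`, the least fixpoint of `(a,b) ↦ (F(a,b), G(a,b))`
equals the least fixpoint of `(a,b) ↦ (F(a,b), lfp (b' ↦ G(a,b')))`. -/
theorem bekic_leszczylowski {A B : Type*} [CompleteLattice A] [CompleteLattice B]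
    (F : A × B → A) (G : A × B → B) (hF : Monotone F) (hG : Monotone G) :
    OrderHom.lfp ⟨fun p => (F p, G p), fun _ _ h => Prod.mk_le_mk.2 ⟨hF h, hG h⟩⟩ =
      OrderHom.lfp
        ⟨fun p => (F p,
            OrderHom.lfp ⟨fun b' => G (p.1, b'),
              fun _ _ hb => hG (Prod.mk_le_mk.2 ⟨le_rfl, hb⟩)⟩),
          fun _ _ h => Prod.mk_le_mk.2 ⟨hF h,
            OrderHom.lfp.monotone fun b' => hG (Prod.mk_le_mk.2 ⟨h.1, le_rfl⟩)⟩⟩ :=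
  OrderHom.lfp_prod_eq_lfp_prod_partialLfp ⟨F, hF⟩ ⟨G, hG⟩
end

section
/- For every index i ∈ {1,…,n} and every proper subset S ⊊ {1,…,n}, one has g_{S,i}(0⃗) ≤ f_i(f⃗^{n−|S|−1}(0⃗)), where |S| denotes the cardinality of S. -/
section

variable {n : ℕ} {f : Fin n → (Fin n → Bool) → Bool}

theorem prunedG_of_mem {S : Finset (Fin n)} {i : Fin n} (hi : i ∈ S) :
    prunedG n f S i = fun _ => false := by
  rw [prunedG]
  simp only [hi, dite_true]

theorem prunedG_of_notMem {S : Finset (Fin n)} {i : Fin n} (hi : i ∉ S) (x : Fin n → Bool) :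
    prunedG n f S i x = f i (fun j => prunedG n f (insert i S) j x) := by
  rw [prunedG]
  simp only [hi, dite_false]

/-- Each unfolding of `g_{S,i}` with `i ∉ S` costs one application of `f⃗` and enlarges `S`,
so at most `n - |S|` applications are ever made. -/
theorem prunedG_apply_le_iterate (hf : ∀ i, Monotone (f i)) (S : Finset (Fin n)) (i : Fin n)
    (x : Fin n → Bool) :
    prunedG n f S i x ≤ (fun y j => f j y)^[n - S.card] x i := by
  by_cases hi : i ∈ S
  · rw [prunedG_of_mem hi]
    exact Bool.false_le _
  · have hS : S.card < n := by
      simpa using Finset.card_lt_univ_of_notMem hi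
    have hcard : n - S.card = n - (insert i S).card + 1 := by
      rw [Finset.card_insert_of_notMem hi]
      omega
    rw [prunedG_of_notMem hi, hcard, Function.iterate_succ_apply']
    exact hf i fun j => prunedG_apply_le_iterate hf (insert i S) j x
termination_by n - S.card
decreasing_by
  rw [Finset.card_insert_of_notMem hi]
  omega

end

theorem prunedG_le_iterate_general {n : ℕ}
    (f : Fin n → (Fin n → Bool) → Bool) (hf : ∀ i, Monotone (f i))
    (i : Fin n) (S : Finset (Fin n)) :
    prunedG n f S i (fun _ => false) ≤
      f i ((fun x j => f j x)^[n - S.card - 1] (fun _ => false)) := by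
  by_cases hi : i ∈ S
  · rw [prunedG_of_mem hi]
    exact Bool.false_le _
  · rw [prunedG_of_notMem hi]
    refine hf i fun j => ?_
    have h := prunedG_apply_le_iterate hf (insert i S) j (fun _ => false)
    rwa [Finset.card_insert_of_notMem hi, ← Nat.sub_sub] at h

/-- Lemma 1: for every index `i` and every proper subset `S ⊊ {1,…,n}`,
`g_{S,i}(0⃗) ≤ f_i(f⃗^{n−|S|−1}(0⃗))`. -/
theorem prunedG_le_iterate {n : ℕ} (hn : 1 ≤ n)
    (f : Fin n → (Fin n → Bool) → Bool) (hf : ∀ i, Monotone (f i))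
    (i : Fin n) (S : Finset (Fin n)) (hS : S ⊂ Finset.univ) :
    prunedG n f S i (fun _ => false) ≤
      f i ((fun x j => f j x)^[n - S.card - 1] (fun _ => false)) :=
  prunedG_le_iterate_general f hf i S
end

section
/- Let i ∈ {1,…,n}, S ⊆ {1,…,n}, m ≥ 0, and T = S ∪ {i}. If f_i(h⃗_Sᵐ(0⃗)) = 0, then h⃗_Sᵖ(0⃗) = h⃗_Tᵖ(0⃗) for every p with 0 ≤ p ≤ m. -/
/-! Since `h⃗_S` is monotone, the orbit `h⃗_Sᵖ(0⃗)` increases with `p`, so `f_i` vanishes on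
the whole orbit up to step `m`. On such points `h⃗_S` and `h⃗_{S ∪ {i}}` differ at most in
coordinate `i`, where `h⃗_S` gives `f_i = 0` as well; hence the two orbits coincide up to `m`. -/

/-- The family of functions `h_{S,j}`: `h_{S,j} = f_j` if `j ∉ S`, and the
constant-`false` (constant-0) function if `j ∈ S`. -/
def hFam (n : ℕ) (f : Fin n → (Fin n → Bool) → Bool)
    (S : Finset (Fin n)) (j : Fin n) : (Fin n → Bool) → Bool :=
  if j ∈ S then fun _ => false else f j

theorem Function.iterate_eq_iterate_of_map_eq_on_orbit {α : Type*} {g g' : α → α} {x : α}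
    {p : ℕ} (h : ∀ k < p, g (g^[k] x) = g' (g^[k] x)) : g^[p] x = g'^[p] x := by
  induction p with
  | zero => rfl
  | succ p ih =>
    rw [Function.iterate_succ_apply', Function.iterate_succ_apply',
      ← ih fun k hk => h k (Nat.lt_succ_of_lt hk), h p (Nat.lt_succ_self p)]

theorem hFam_monotone {n : ℕ} {f : Fin n → (Fin n → Bool) → Bool} (hf : ∀ j, Monotone (f j))
    (S : Finset (Fin n)) : Monotone fun x j => hFam n f S j x := by
  intro x y hxy j
  by_cases hj : j ∈ S
  · simp [hFam, hj]
  · simpa [hFam, hj] using hf j hxy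

theorem hFam_insert_eq_of_apply_eq_false {n : ℕ} {f : Fin n → (Fin n → Bool) → Bool}
    {i : Fin n} (S : Finset (Fin n)) {x : Fin n → Bool} (hx : f i x = false) :
    (fun j => hFam n f (insert i S) j x) = fun j => hFam n f S j x := by
  funext j
  unfold hFam
  by_cases hj : j = i
  · subst hj
    by_cases hjS : j ∈ S <;> simp [hjS, hx]
  · simp [hj]

theorem hFam_iterate_eq_of_apply_eq_false_general {n : ℕ}
    (f : Fin n → (Fin n → Bool) → Bool) (hf : ∀ i, Monotone (f i))
    (i : Fin n) (S : Finset (Fin n)) (m : ℕ)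
    (h0 : f i ((fun x j => hFam n f S j x)^[m] (fun _ => false)) = false) :
    ∀ p ≤ m,
      (fun x j => hFam n f S j x)^[p] (fun _ => false) =
        (fun x j => hFam n f (insert i S) j x)^[p] (fun _ => false) := by
  have horbit : Monotone fun k => (fun x j => hFam n f S j x)^[k] (fun _ => false) :=
    (hFam_monotone hf S).monotone_iterate_of_le_map fun _ => Bool.false_le _
  have hfi : ∀ k ≤ m, f i ((fun x j => hFam n f S j x)^[k] (fun _ => false)) = false :=
    fun k hk => le_antisymm ((hf i (horbit hk)).trans h0.le) bot_le
  intro p hp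
  exact Function.iterate_eq_iterate_of_map_eq_on_orbit fun k hk =>
    (hFam_insert_eq_of_apply_eq_false S (hfi k (by omega))).symm

/-- Lemma 3: for `T = S ∪ {i}`, if `f_i(h⃗_Sᵐ(0⃗)) = 0` then `h⃗_Sᵖ(0⃗) = h⃗_Tᵖ(0⃗)`
for every `p ≤ m`. -/
theorem hFam_iterate_eq_of_apply_eq_false {n : ℕ} (hn : 1 ≤ n)
    (f : Fin n → (Fin n → Bool) → Bool) (hf : ∀ i, Monotone (f i))
    (i : Fin n) (S : Finset (Fin n)) (m : ℕ)
    (h0 : f i ((fun x j => hFam n f S j x)^[m] (fun _ => false)) = false) :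
    ∀ p ≤ m,
      (fun x j => hFam n f S j x)^[p] (fun _ => false) =
        (fun x j => hFam n f (insert i S) j x)^[p] (fun _ => false) :=
  hFam_iterate_eq_of_apply_eq_false_general f hf i S m h0
end
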